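/- For symmetric matrices K, M ∈ ℝ^{L×L} with H K H ≠ 0 and H M H ≠ 0, CKA(K, M) = 1 if and only if there exists a real constant c > 0 such that H K H = c · H M H. -/

import Mathlib

open Matrix

/-- The centering matrix `H = I - (1/L) 𝟙𝟙ᵀ`. -/
noncomputable def centering (L : ℕ) : Matrix (Fin L) (Fin L) ℝ :=
  1 - (L : ℝ)⁻¹ • Matrix.vecMulVec (fun _ => (1 : ℝ)) (fun _ => (1 : ℝ))

/-- The empirical Hilbert–Schmidt Independence Criterion
`HSIC(K, M) = tr(K H M H) / (L-1)²`. -/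
noncomputable def HSIC (L : ℕ) (K M : Matrix (Fin L) (Fin L) ℝ) : ℝ :=
  (K * centering L * M * centering L).trace / ((L : ℝ) - 1) ^ 2

/-- The Centered Kernel Alignment
`CKA(K, M) = HSIC(K, M) / √(HSIC(K, K) · HSIC(M, M))`. -/
noncomputable def CKA (L : ℕ) (K M : Matrix (Fin L) (Fin L) ℝ) : ℝ :=
  HSIC L K M / Real.sqrt (HSIC L K K * HSIC L M M)

/-- The Frobenius norm of a matrix. -/
noncomputable def frob {m n : Type*} [Fintype m] [Fintype n]
    (A : Matrix m n ℝ) : ℝ :=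
  Real.sqrt (∑ i, ∑ j, (A i j) ^ 2)

/-! Since `H` is symmetric and idempotent, `(L - 1)² HSIC(K, M) = tr((HKH)ᵀ (HMH))` is the
Frobenius inner product of `HKH` and `HMH` for symmetric `K`. Hence `CKA(K, M)` is the cosine of
the angle between `HKH` and `HMH`, and it equals `1` exactly in the equality case of the
Cauchy–Schwarz inequality. -/

open RealInnerProductSpace

namespace Matrix

variable {m n : Type*} [Fintype m] [Fintype n]

theorem trace_transpose_mul_eq_inner_vec (A B : Matrix m n ℝ) :
    (Aᵀ * B).trace = ⟪WithLp.toLp 2 A.vec, WithLp.toLp 2 B.vec⟫ := by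
  rw [EuclideanSpace.inner_toLp_toLp, star_trivial, dotProduct_comm, vec_dotProduct_vec]

theorem norm_toLp_vec_sq (A : Matrix m n ℝ) :
    ‖WithLp.toLp 2 A.vec‖ ^ 2 = (Aᵀ * A).trace := by
  rw [trace_transpose_mul_eq_inner_vec, real_inner_self_eq_norm_sq]

theorem trace_transpose_mul_div_sqrt_eq_one_iff (A B : Matrix m n ℝ) :
    (Aᵀ * B).trace / √((Aᵀ * A).trace * (Bᵀ * B).trace) = 1 ↔
      B ≠ 0 ∧ ∃ r : ℝ, 0 < r ∧ A = r • B := by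
  rw [← norm_toLp_vec_sq, ← norm_toLp_vec_sq, ← mul_pow, Real.sqrt_sq (by positivity),
    trace_transpose_mul_eq_inner_vec, real_inner_comm, mul_comm,
    real_inner_div_norm_mul_norm_eq_one_iff]
  simp only [ne_eq, WithLp.ofLp_zero, vec_eq_zero_iff, ← WithLp.toLp_smul, ← vec_smul,
    (WithLp.toLp_injective 2).eq_iff, vec_inj]

end Matrix

open Matrix

theorem centering_transpose (L : ℕ) : (centering L)ᵀ = centering L := by
  simp [centering, transpose_sub]

theorem isIdempotentElem_centering (L : ℕ) : IsIdempotentElem (centering L) := by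
  set J : Matrix (Fin L) (Fin L) ℝ := vecMulVec (fun _ => 1) (fun _ => 1)
  have hJ : J * J = (L : ℝ) • J := by
    ext; simp [J, mul_apply, vecMulVec_apply]
  have hL : (L : ℝ)⁻¹ * (L : ℝ)⁻¹ * L = (L : ℝ)⁻¹ := by
    rcases eq_or_ne (L : ℝ) 0 with h | h
    · simp [h]
    · field_simp
  have hH : centering L = 1 - (L : ℝ)⁻¹ • J := rfl
  rw [IsIdempotentElem, hH]
  simp only [sub_mul, mul_sub, one_mul, mul_one, smul_mul_smul, hJ, smul_smul, hL]
  abel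

theorem trace_mul_centering_mul_centering (L : ℕ) (K M : Matrix (Fin L) (Fin L) ℝ) :
    (K * centering L * M * centering L).trace =
      (centering L * K * centering L * (centering L * M * centering L)).trace := by
  set H := centering L
  have hHH : H * H = H := (isIdempotentElem_centering L).eq
  calc (K * H * M * H).trace = (K * H * M * (H * H)).trace := by rw [hHH]
    _ = (H * (K * H * M * H)).trace := by rw [← Matrix.mul_assoc, trace_mul_comm]
    _ = (H * K * H * (H * M * H)).trace := by
      simp only [Matrix.mul_assoc, ← Matrix.mul_assoc H H (M * H), hHH]

theorem HSIC_eq_trace_transpose_mul (L : ℕ) {K : Matrix (Fin L) (Fin L) ℝ} (hK : Kᵀ = K)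
    (M : Matrix (Fin L) (Fin L) ℝ) :
    HSIC L K M = ((centering L * K * centering L)ᵀ * (centering L * M * centering L)).trace /
      ((L : ℝ) - 1) ^ 2 := by
  rw [HSIC, trace_mul_centering_mul_centering, transpose_mul, transpose_mul, centering_transpose,
    hK]
  simp only [Matrix.mul_assoc]

theorem CKA_eq_trace_transpose_mul_div_sqrt {L : ℕ} (hL : L ≠ 1)
    {K M : Matrix (Fin L) (Fin L) ℝ} (hK : Kᵀ = K) (hM : Mᵀ = M) :
    CKA L K M =
      ((centering L * K * centering L)ᵀ * (centering L * M * centering L)).trace /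
        √(((centering L * K * centering L)ᵀ * (centering L * K * centering L)).trace *
          ((centering L * M * centering L)ᵀ * (centering L * M * centering L)).trace) := by
  have hd : ((L : ℝ) - 1) ^ 2 ≠ 0 := pow_ne_zero _ (sub_ne_zero.2 (by exact_mod_cast hL))
  rw [CKA, HSIC_eq_trace_transpose_mul L hK, HSIC_eq_trace_transpose_mul L hK,
    HSIC_eq_trace_transpose_mul L hM, div_mul_div_comm, Real.sqrt_div' _ (by positivity),
    ← pow_two, Real.sqrt_sq (by positivity), div_div_div_cancel_right₀ hd]

theorem cka_eq_one_iff_general (L : ℕ) (hL : 2 ≤ L)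
    (K M : Matrix (Fin L) (Fin L) ℝ) (hK : Kᵀ = K) (hM : Mᵀ = M)
    (hMc : centering L * M * centering L ≠ 0) :
    CKA L K M = 1 ↔
      ∃ c : ℝ, 0 < c ∧
        centering L * K * centering L = c • (centering L * M * centering L) := by
  rw [CKA_eq_trace_transpose_mul_div_sqrt (by omega) hK hM,
    trace_transpose_mul_div_sqrt_eq_one_iff, and_iff_right hMc]

theorem cka_eq_one_iff (L : ℕ) (hL : 2 ≤ L)
    (K M : Matrix (Fin L) (Fin L) ℝ) (hK : Kᵀ = K) (hM : Mᵀ = M)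
    (hKc : centering L * K * centering L ≠ 0)
    (hMc : centering L * M * centering L ≠ 0) :
    CKA L K M = 1 ↔
      ∃ c : ℝ, 0 < c ∧
        centering L * K * centering L = c • (centering L * M * centering L) :=
  cka_eq_one_iff_general L hL K M hK hM hMc
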